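/- Cayley-Grassmannian criterion: let 𝕆^ℂ be the complex octonions with bilinear form ⟨u,v⟩ = Re(u * v̄) and imaginary part Im 𝕆^ℂ. Let B be a four-dimensional ℂ-subspace of Im 𝕆^ℂ, and let B^⊥ := {w ∈ 𝕆^ℂ | ⟨w,b⟩ = 0 for all b ∈ B} be its orthogonal complement in 𝕆^ℂ. Then Re((x*y)*z) = 0 for all x, y, z ∈ B (i.e. the associative three-form vanishes identically on B) if and only if B^⊥ is closed under multiplication (u, v ∈ B^⊥ ⟹ u*v ∈ B^⊥), i.e. B^⊥ is a subalgebra of 𝕆^ℂ. -/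

import Mathlib

noncomputable section

/-- The Cayley–Dickson product on the complex octonions
`𝕆^ℂ = Quaternion ℂ × Quaternion ℂ`:  `(a,b)·(c,d) = (a c - d* b, b c* + d a)`. -/
def octMul (x y : Quaternion ℂ × Quaternion ℂ) : Quaternion ℂ × Quaternion ℂ :=
  (x.1 * y.1 - star y.2 * x.2, x.2 * star y.1 + y.2 * x.1)

/-- Octonionic conjugation `(a, b)‾ = (a*, -b)`. -/
def octConj (x : Quaternion ℂ × Quaternion ℂ) : Quaternion ℂ × Quaternion ℂ :=
  (star x.1, -x.2)

/-- The bilinear form `⟨u, v⟩ = Re (u * v̄)` on the complex octonions. -/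
def octInner (u v : Quaternion ℂ × Quaternion ℂ) : ℂ :=
  (octMul u (octConj v)).1.re

/-!
A four-dimensional `B ⊆ Im 𝕆^ℂ` contains some `x` with `⟨x, x⟩ ≠ 0`: otherwise `B` would be
totally isotropic and hence lie in the three-dimensional space `(B ⊕ ℂ 1)^⊥`. Since
`x̄ (x c) = ⟨x, x⟩ c`, left multiplication by `x` is injective, and `B^⊥` is again
four-dimensional; so if the three-form vanishes on `B` then `x B = B^⊥`, while if `B^⊥` is a
subalgebra (it is then also closed under conjugation) then `x B^⊥ = B`. For imaginary `x`, the
polarized composition law `⟨a p, c q⟩ + ⟨c p, a q⟩ = 2 ⟨a, c⟩ ⟨p, q⟩` together with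
`x (x c) = -⟨x, x⟩ c` gives
`⟨(x a)(x c), z⟩ = 2 ⟨x a, z⟩ Re (x c) - 2 ⟨z, x⟩ ⟨x c, a⟩ - ⟨x, x⟩ ⟨z a, c⟩`,
and in either situation every term on the right vanishes.
-/

local notation "𝕆" => Quaternion ℂ × Quaternion ℂ

namespace ComplexOctonion

open Module

attribute [local simp] Quaternion.re_zero Quaternion.imI_zero Quaternion.imJ_zero
  Quaternion.imK_zero Quaternion.re_one Quaternion.imI_one Quaternion.imJ_one Quaternion.imK_one

/-- The unit `(1, 0)`; in the product ring `(1 : 𝕆)` would be `(1, 1)`. -/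
def octOne : 𝕆 := (1, 0)

lemma octInner_eq_coord_sum (u v : 𝕆) :
    octInner u v = u.1.re * v.1.re + u.1.imI * v.1.imI + u.1.imJ * v.1.imJ + u.1.imK * v.1.imK
      + u.2.re * v.2.re + u.2.imI * v.2.imI + u.2.imJ * v.2.imJ + u.2.imK * v.2.imK := by
  simp [octInner, octMul, octConj]
  ring

lemma octInner_comm (u v : 𝕆) : octInner u v = octInner v u := by
  simp only [octInner_eq_coord_sum]; ring

def octForm : LinearMap.BilinForm ℂ 𝕆 :=
  LinearMap.mk₂ ℂ octInner
    (fun u u' v => by simp only [octInner_eq_coord_sum]; simp; ring)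
    (fun c u v => by simp only [octInner_eq_coord_sum]; simp; ring)
    (fun u v v' => by simp only [octInner_eq_coord_sum]; simp; ring)
    (fun c u v => by simp only [octInner_eq_coord_sum]; simp; ring)

@[simp] lemma octForm_apply (u v : 𝕆) : octForm u v = octInner u v := rfl

lemma octForm_isSymm : octForm.IsSymm := ⟨octInner_comm⟩

lemma octForm_nondegenerate : octForm.Nondegenerate := by
  refine (octForm_isSymm.isRefl.nondegenerate_iff_separatingLeft).mpr fun u h => ?_
  ext
  all_goals first
    | simpa [octInner_eq_coord_sum] using h (⟨1, 0, 0, 0⟩, 0)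
    | simpa [octInner_eq_coord_sum] using h (⟨0, 1, 0, 0⟩, 0)
    | simpa [octInner_eq_coord_sum] using h (⟨0, 0, 1, 0⟩, 0)
    | simpa [octInner_eq_coord_sum] using h (⟨0, 0, 0, 1⟩, 0)
    | simpa [octInner_eq_coord_sum] using h (0, ⟨1, 0, 0, 0⟩)
    | simpa [octInner_eq_coord_sum] using h (0, ⟨0, 1, 0, 0⟩)
    | simpa [octInner_eq_coord_sum] using h (0, ⟨0, 0, 1, 0⟩)
    | simpa [octInner_eq_coord_sum] using h (0, ⟨0, 0, 0, 1⟩)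

lemma octInner_octOne (u : 𝕆) : octInner u octOne = u.1.re := by
  simp [octInner_eq_coord_sum, octOne]

lemma octMul_octOne (u : 𝕆) : octMul u octOne = u := by
  simp [octMul, octOne]

lemma octConj_octConj (u : 𝕆) : octConj (octConj u) = u := by
  simp [octConj]

lemma octConj_eq_neg (u : 𝕆) (hu : u.1.re = 0) : octConj u = -u := by
  ext <;> simp [octConj, hu]

lemma octInner_octConj (u v : 𝕆) : octInner (octConj u) v = octInner u (octConj v) := by
  simp [octInner, octMul, octConj]

lemma octInner_octMul (a b c : 𝕆) :
    octInner (octMul a b) c = octInner a (octMul c (octConj b)) := by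
  simp [octInner, octMul, octConj]
  ring

lemma re_octMul_of_re_eq_zero (u : 𝕆) {v : 𝕆} (hv : v.1.re = 0) :
    (octMul u v).1.re = -octInner u v := by
  rw [show (octMul u v).1.re = octInner u (octConj v) by rw [octInner, octConj_octConj],
    octConj_eq_neg v hv, ← octForm_apply, map_neg, octForm_apply]

lemma octInner_octMul_octMul_add_swap (a p c q : 𝕆) :
    octInner (octMul a p) (octMul c q) + octInner (octMul c p) (octMul a q) =
      2 * octInner a c * octInner p q := by
  simp [octInner, octMul, octConj]
  ring

lemma octMul_self_octMul (x c : 𝕆) :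
    octMul x (octMul x c) = (2 * x.1.re) • octMul x c - octInner x x • c := by
  simp only [octInner_eq_coord_sum, octMul]
  ext <;> simp <;> ring

lemma octConj_octMul_octMul (x c : 𝕆) : octMul (octConj x) (octMul x c) = octInner x x • c := by
  simp only [octInner_eq_coord_sum, octMul, octConj]
  ext <;> simp <;> ring

lemma finrank_octonion : finrank ℂ 𝕆 = 8 := by
  rw [Module.finrank_prod, Quaternion.finrank_eq_four]

lemma mem_orthogonal_octForm {W : Submodule ℂ 𝕆} {u : 𝕆} :
    u ∈ octForm.orthogonal W ↔ ∀ w ∈ W, octInner u w = 0 := by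
  simp only [LinearMap.BilinForm.mem_orthogonal_iff, octForm_apply,
    octInner_comm _ u]

lemma finrank_orthogonal_octForm (W : Submodule ℂ 𝕆) :
    finrank ℂ (octForm.orthogonal W) = 8 - finrank ℂ W := by
  rw [LinearMap.BilinForm.finrank_orthogonal octForm_nondegenerate, finrank_octonion]

lemma exists_octInner_self_ne_zero {W : Submodule ℂ 𝕆} (hW : 4 ≤ finrank ℂ W)
    (hIm : ∀ w ∈ W, (w : 𝕆).1.re = 0) : ∃ x ∈ W, octInner x x ≠ 0 := by
  by_contra! hiso
  have hpair : ∀ p ∈ W, ∀ q ∈ W, octInner p q = 0 := fun p hp q hq => by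
    rw [← octForm_apply, octForm_isSymm.polarization]
    simp only [octForm_apply, hiso p hp, hiso q hq, hiso _ (W.add_mem hp hq), sub_zero,
      zero_div]
  have hOne : octOne ∉ W := fun h => by simpa [octOne] using hIm _ h
  have hle : W ≤ octForm.orthogonal (W ⊔ ℂ ∙ octOne) := by
    intro m hm
    rw [mem_orthogonal_octForm]
    intro n hn
    obtain ⟨w, hw, _, hc, rfl⟩ := Submodule.mem_sup.mp hn
    obtain ⟨c, rfl⟩ := Submodule.mem_span_singleton.mp hc
    rw [← octForm_apply, map_add, map_smul, octForm_apply, octForm_apply, hpair m hm w hw,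
      octInner_octOne, hIm m hm, smul_zero, add_zero]
  have := Submodule.finrank_mono hle
  rw [finrank_orthogonal_octForm, Submodule.finrank_sup_span_singleton hOne] at this
  omega

def octLMul (x : 𝕆) : 𝕆 →ₗ[ℂ] 𝕆 where
  toFun := octMul x
  map_add' u v := by ext <;> simp [octMul] <;> ring
  map_smul' c u := by ext <;> simp [octMul] <;> ring

@[simp] lemma octLMul_apply (x u : 𝕆) : octLMul x u = octMul x u := rfl

lemma octLMul_injective {x : 𝕆} (hx : octInner x x ≠ 0) : Function.Injective (octLMul x) := by
  intro u v huv
  have := congrArg (octMul (octConj x)) huv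
  simp only [octLMul_apply, octConj_octMul_octMul] at this
  exact smul_right_injective 𝕆 hx this

lemma map_octLMul_eq {x : 𝕆} (hx : octInner x x ≠ 0) {W W' : Submodule ℂ 𝕆}
    (hle : W.map (octLMul x) ≤ W') (hdim : finrank ℂ W' ≤ finrank ℂ W) :
    W.map (octLMul x) = W' :=
  Submodule.eq_of_le_of_finrank_le hle <| by
    rwa [← (Submodule.equivMapOfInjective _ (octLMul_injective hx) W).finrank_eq]

lemma octInner_octMul_octMul_of_re_eq_zero {x : 𝕆} (hx : x.1.re = 0) (a c z : 𝕆) :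
    octInner (octMul (octMul x a) (octMul x c)) z =
      2 * octInner (octMul x a) z * (octMul x c).1.re - 2 * octInner z x * octInner (octMul x c) a
        - octInner x x * octInner (octMul z a) c := by
  have e₁ := octInner_octMul_octMul_add_swap (octMul x a) (octMul x c) z octOne
  have e₂ := octInner_octMul_octMul_add_swap z (octMul x c) x a
  have e₃ : octInner (octMul x (octMul x c)) (octMul z a) =
      -octInner x x * octInner (octMul z a) c := by
    rw [octMul_self_octMul, hx, ← octForm_apply]
    simp [octInner_comm c]
  rw [octMul_octOne, octMul_octOne, octInner_octOne] at e₁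
  linear_combination e₁ - e₂ + e₃

lemma octConj_mem_orthogonal {W : Submodule ℂ 𝕆} (hIm : ∀ w ∈ W, (w : 𝕆).1.re = 0) {u : 𝕆}
    (hu : u ∈ octForm.orthogonal W) :
    octConj u ∈ octForm.orthogonal W :=
  mem_orthogonal_octForm.2 fun w hw => by
    rw [octInner_octConj, octConj_eq_neg w (hIm w hw), ← octForm_apply, map_neg, octForm_apply,
      mem_orthogonal_octForm.1 hu w hw, neg_zero]

section FourDimensional

variable {B : Submodule ℂ 𝕆} (hdim : finrank ℂ B = 4) (hIm : ∀ b ∈ B, (b : 𝕆).1.re = 0)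
include hdim hIm

lemma octMul_mem_orthogonal_of_octInner_octMul_eq_zero
    (hB : ∀ p ∈ B, ∀ q ∈ B, ∀ r ∈ B, octInner (octMul p q) r = 0) {u v : 𝕆}
    (hu : u ∈ octForm.orthogonal B) (hv : v ∈ octForm.orthogonal B) :
    octMul u v ∈ octForm.orthogonal B := by
  obtain ⟨x, hxB, hx⟩ := exists_octInner_self_ne_zero hdim.ge hIm
  have hxC : B.map (octLMul x) = octForm.orthogonal B :=
    map_octLMul_eq hx
      (by rintro _ ⟨b, hb, rfl⟩; exact mem_orthogonal_octForm.2 (hB x hxB b hb))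
      (by rw [finrank_orthogonal_octForm, hdim])
  obtain ⟨a, ha, rfl⟩ := hxC ▸ hu
  obtain ⟨c, hc, rfl⟩ := hxC ▸ hv
  refine mem_orthogonal_octForm.2 fun z hz => ?_
  rw [octLMul_apply, octLMul_apply, octInner_octMul_octMul_of_re_eq_zero (hIm x hxB),
    hB x hxB a ha z hz, hB x hxB c hc a ha, hB z hz a ha c hc]
  ring

lemma octInner_octMul_eq_zero_of_octMul_mem_orthogonal
    (hC : ∀ u ∈ octForm.orthogonal B, ∀ v ∈ octForm.orthogonal B,
      octMul u v ∈ octForm.orthogonal B)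
    {p q r : 𝕆} (hp : p ∈ B) (hq : q ∈ B) (hr : r ∈ B) : octInner (octMul p q) r = 0 := by
  obtain ⟨x, hxB, hx⟩ := exists_octInner_self_ne_zero hdim.ge hIm
  have hxB' : (octForm.orthogonal B).map (octLMul x) = B := by
    refine map_octLMul_eq hx ?_ (by rw [finrank_orthogonal_octForm, hdim])
    rintro _ ⟨c, hc, rfl⟩
    rw [← LinearMap.BilinForm.orthogonal_orthogonal octForm_nondegenerate
      octForm_isSymm.isRefl B]
    refine mem_orthogonal_octForm.2 fun n hn => ?_
    rw [octLMul_apply, octInner_octMul, octInner_comm]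
    exact mem_orthogonal_octForm.1 (hC n hn _ (octConj_mem_orthogonal hIm hc)) x hxB
  obtain ⟨a, ha, rfl⟩ := hxB'.symm ▸ hp
  obtain ⟨c, hc, rfl⟩ := hxB'.symm ▸ hq
  rw [octLMul_apply] at hq ⊢
  have hRe : (octMul x c).1.re = 0 := hIm _ hq
  have hca : octInner (octMul x c) a = 0 := by
    rw [octInner_comm]
    exact mem_orthogonal_octForm.1 ha _ hq
  have hrac : octInner (octMul r a) c = 0 := by
    rw [octInner_octMul, octInner_comm]
    exact mem_orthogonal_octForm.1 (hC c hc _ (octConj_mem_orthogonal hIm ha)) r hr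
  rw [octLMul_apply, octInner_octMul_octMul_of_re_eq_zero (hIm x hxB), hRe, hca, hrac]
  ring

end FourDimensional

end ComplexOctonion

open ComplexOctonion

/-- Cayley-Grassmannian criterion: for a four-dimensional subspace `B` of the imaginary
complex octonions, the associative three-form `(x,y,z) ↦ Re ((x*y)*z)` vanishes
identically on `B` iff `B^⊥` is a subalgebra of `𝕆^ℂ` (closed under multiplication). -/
theorem cayley_grassmannian_criterion
    (B : Submodule ℂ (Quaternion ℂ × Quaternion ℂ))
    (hdim : Module.finrank ℂ B = 4)
    (hIm : ∀ b ∈ B, (b : Quaternion ℂ × Quaternion ℂ).1.re = 0) :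
    (∀ x ∈ B, ∀ y ∈ B, ∀ z ∈ B, (octMul (octMul x y) z).1.re = 0) ↔
    (∀ u v : Quaternion ℂ × Quaternion ℂ,
      (∀ b ∈ B, octInner u b = 0) → (∀ b ∈ B, octInner v b = 0) →
      ∀ b ∈ B, octInner (octMul u v) b = 0) := by
  have hre : ∀ p, ∀ r ∈ B, (octMul p r).1.re = 0 ↔ octInner p r = 0 := fun p r hr => by
    rw [re_octMul_of_re_eq_zero p (hIm r hr), neg_eq_zero]
  simp only [← mem_orthogonal_octForm]
  constructor
  · intro hT u v hu hv
    exact octMul_mem_orthogonal_of_octInner_octMul_eq_zero hdim hIm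
      (fun p hp q hq r hr => (hre _ r hr).1 (hT p hp q hq r hr)) hu hv
  · intro hS x hx y hy z hz
    exact (hre _ z hz).2 <| octInner_octMul_eq_zero_of_octMul_mem_orthogonal hdim hIm
      (fun u hu v hv => hS u v hu hv) hx hy hz
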